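/- Given finitely many axis-aligned boxes R₁, ..., Rₖ in ℝ³ and one point p, the function q ↦ Σⱼ dist₁(q, Rⱼ) + ‖q - p‖₁ attains its minimum, over q ∈ ℝ³, at a point of the Hanan grid generated by p and the boxes, i.e., at a point whose x-coordinate is among the x-coordinates {aⱼ₁, bⱼ₁, p₁}, and similarly for y and z. -/
import Mathlib


/-- ℓ1 norm on ℝ³ (as `Fin 3 → ℝ`). -/
def l1norm (u : Fin 3 → ℝ) : ℝ := ∑ i, |u i|

/-- ℓ1-distance from a point to an axis-aligned box `[a,b]`. -/
noncomputable def dist1Box (a b q : Fin 3 → ℝ) : ℝ :=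
  sInf {L : ℝ | ∃ r : Fin 3 → ℝ, (∀ i, a i ≤ r i ∧ r i ≤ b i) ∧ L = l1norm (q - r)}

/-- 1D distance from `t` to the interval `[a,b]`. -/
noncomputable def distI (a b t : ℝ) : ℝ := max (a - t) 0 + max (t - b) 0

lemma distI_le_abs {a b r q : ℝ} (ha : a ≤ r) (hb : r ≤ b) : distI a b q ≤ |q - r| := by
  unfold distI
  rcases le_total q r with h | h
  · rw [abs_of_nonpos (by linarith), max_eq_right (show q - b ≤ 0 by linarith)]
    rw [add_zero]
    exact max_le (by linarith) (by linarith)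
  · rw [abs_of_nonneg (by linarith), max_eq_right (show a - q ≤ 0 by linarith)]
    rw [zero_add]
    exact max_le (by linarith) (by linarith)

lemma abs_clamp {a b q : ℝ} (hab : a ≤ b) : |q - max a (min b q)| = distI a b q := by
  unfold distI
  rcases le_total q a with h1 | h1
  · rw [min_eq_right (show q ≤ b by linarith), max_eq_left (show q ≤ a by linarith),
      abs_of_nonpos (by linarith), max_eq_left (by linarith),
      max_eq_right (by linarith)]
    ring
  · rcases le_total q b with h2 | h2
    · rw [min_eq_right h2, max_eq_right h1, sub_self, abs_zero,
        max_eq_right (by linarith), max_eq_right (by linarith)]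
      ring
    · rw [min_eq_left h2, max_eq_right hab, abs_of_nonneg (by linarith),
        max_eq_right (by linarith), max_eq_left (by linarith)]
      ring

lemma dist1Box_eq (a b q : Fin 3 → ℝ) (hab : ∀ i, a i ≤ b i) :
    dist1Box a b q = ∑ i, distI (a i) (b i) (q i) := by
  set r : Fin 3 → ℝ := fun i => max (a i) (min (b i) (q i)) with hr
  have hrbox : ∀ i, a i ≤ r i ∧ r i ≤ b i := by
    intro i
    refine ⟨le_max_left _ _, max_le (hab i) (min_le_left _ _)⟩
  have hval : l1norm (q - r) = ∑ i, distI (a i) (b i) (q i) := by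
    unfold l1norm
    refine Finset.sum_congr rfl fun i _ => ?_
    rw [Pi.sub_apply]
    exact abs_clamp (hab i)
  have hmem : (∑ i, distI (a i) (b i) (q i)) ∈
      {L : ℝ | ∃ r : Fin 3 → ℝ, (∀ i, a i ≤ r i ∧ r i ≤ b i) ∧ L = l1norm (q - r)} :=
    ⟨r, hrbox, hval.symm⟩
  apply le_antisymm
  · apply csInf_le
    · refine ⟨0, fun L hL => ?_⟩
      obtain ⟨r', _, hL⟩ := hL
      rw [hL]
      exact Finset.sum_nonneg fun i _ => abs_nonneg _
    · exact hmem
  · apply le_csInf ⟨_, hmem⟩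
    rintro L ⟨r', hr', rfl⟩
    unfold l1norm
    refine Finset.sum_le_sum fun i _ => ?_
    rw [Pi.sub_apply]
    exact distI_le_abs (hr' i).1 (hr' i).2

lemma distI_affine {a b l u : ℝ} (hab : a ≤ b) (ha : a ≤ l ∨ u ≤ a) (hb : b ≤ l ∨ u ≤ b) :
    ∃ s : ℝ, ∀ x, l ≤ x → x ≤ u → distI a b x = distI a b l + s * (x - l) := by
  rcases ha with ha | ha
  · rcases hb with hb | hb
    · -- b ≤ l : on [l,u], distI = x - b
      refine ⟨1, fun x h1 h2 => ?_⟩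
      unfold distI
      rw [max_eq_right (show a - x ≤ 0 by linarith), max_eq_left (show 0 ≤ x - b by linarith),
        max_eq_right (show a - l ≤ 0 by linarith), max_eq_left (show 0 ≤ l - b by linarith)]
      ring
    · -- a ≤ l, u ≤ b : distI = 0
      refine ⟨0, fun x h1 h2 => ?_⟩
      unfold distI
      rw [max_eq_right (show a - x ≤ 0 by linarith), max_eq_right (show x - b ≤ 0 by linarith),
        max_eq_right (show a - l ≤ 0 by linarith), max_eq_right (show l - b ≤ 0 by linarith)]
      ring
  · -- u ≤ a : distI = a - x
    refine ⟨-1, fun x h1 h2 => ?_⟩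
    unfold distI
    rw [max_eq_left (show 0 ≤ a - x by linarith), max_eq_right (show x - b ≤ 0 by linarith),
      max_eq_left (show 0 ≤ a - l by linarith), max_eq_right (show l - b ≤ 0 by linarith)]
    ring

lemma abs_affine {p l u : ℝ} (hp : p ≤ l ∨ u ≤ p) :
    ∃ s : ℝ, ∀ x, l ≤ x → x ≤ u → |x - p| = |l - p| + s * (x - l) := by
  rcases hp with hp | hp
  · refine ⟨1, fun x h1 h2 => ?_⟩
    rw [abs_of_nonneg (by linarith), abs_of_nonneg (by linarith)]
    ring
  · refine ⟨-1, fun x h1 h2 => ?_⟩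
    rw [abs_of_nonpos (by linarith), abs_of_nonpos (by linarith)]
    ring

lemma distI_mono_left {a b t m : ℝ} (hab : a ≤ b) (h : t ≤ m) (hm : m ≤ a) :
    distI a b m ≤ distI a b t := by
  unfold distI
  rw [max_eq_left (show 0 ≤ a - m by linarith), max_eq_right (show m - b ≤ 0 by linarith),
    max_eq_left (show 0 ≤ a - t by linarith), max_eq_right (show t - b ≤ 0 by linarith)]
  linarith

lemma distI_mono_right {a b t m : ℝ} (hab : a ≤ b) (h : m ≤ t) (hm : b ≤ m) :
    distI a b m ≤ distI a b t := by
  unfold distI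
  rw [max_eq_right (show a - m ≤ 0 by linarith), max_eq_left (show 0 ≤ m - b by linarith),
    max_eq_right (show a - t ≤ 0 by linarith), max_eq_left (show 0 ≤ t - b by linarith)]
  linarith

lemma oneD (k : ℕ) (A B : Fin k → ℝ) (hAB : ∀ j, A j ≤ B j) (P : ℝ) :
    ∃ t : ℝ, (t = P ∨ (∃ j, A j = t) ∨ (∃ j, B j = t)) ∧
      ∀ t' : ℝ, (∑ j, distI (A j) (B j) t) + |t - P| ≤
        (∑ j, distI (A j) (B j) t') + |t' - P| := by
  classical
  set g : ℝ → ℝ := fun t => (∑ j, distI (A j) (B j) t) + |t - P| with hg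
  set S : Finset ℝ := insert P (Finset.image A Finset.univ ∪ Finset.image B Finset.univ) with hS
  have hPS : P ∈ S := Finset.mem_insert_self _ _
  have hAS : ∀ j, A j ∈ S := by
    intro j
    simp [hS]
  have hBS : ∀ j, B j ∈ S := by
    intro j
    simp [hS]
  obtain ⟨t₀, ht₀S, ht₀⟩ := S.exists_min_image g ⟨P, hPS⟩
  have ht₀mem : t₀ = P ∨ (∃ j, A j = t₀) ∨ (∃ j, B j = t₀) := by
    have := ht₀S
    simp only [hS, Finset.mem_insert, Finset.mem_union, Finset.mem_image,
      Finset.mem_univ, true_and] at this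
    tauto
  refine ⟨t₀, ht₀mem, fun t' => ?_⟩
  by_cases hL : (S.filter (· ≤ t')).Nonempty
  · by_cases hU : (S.filter (t' ≤ ·)).Nonempty
    · -- t' between candidates l and u
      set l := (S.filter (· ≤ t')).max' hL with hl
      set u := (S.filter (t' ≤ ·)).min' hU with hu
      have hlS : l ∈ S := (Finset.mem_filter.mp ((S.filter (· ≤ t')).max'_mem hL)).1
      have huS : u ∈ S := (Finset.mem_filter.mp ((S.filter (t' ≤ ·)).min'_mem hU)).1
      have hlt : l ≤ t' := (Finset.mem_filter.mp ((S.filter (· ≤ t')).max'_mem hL)).2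
      have htu : t' ≤ u := (Finset.mem_filter.mp ((S.filter (t' ≤ ·)).min'_mem hU)).2
      have hsep : ∀ s ∈ S, s ≤ l ∨ u ≤ s := by
        intro s hs
        rcases le_total s t' with h | h
        · exact Or.inl (Finset.le_max' (S.filter (· ≤ t')) s
            (Finset.mem_filter.mpr ⟨hs, h⟩))
        · exact Or.inr (Finset.min'_le (S.filter (t' ≤ ·)) s
            (Finset.mem_filter.mpr ⟨hs, h⟩))
      have hsA : ∀ j : Fin k, ∃ s : ℝ, ∀ x, l ≤ x → x ≤ u →
          distI (A j) (B j) x = distI (A j) (B j) l + s * (x - l) := fun j =>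
        distI_affine (hAB j) (hsep _ (hAS j)) (hsep _ (hBS j))
      choose s hs using hsA
      obtain ⟨sP, hsP⟩ := abs_affine (p := P) (l := l) (u := u) (hsep _ hPS)
      have key : ∀ x, l ≤ x → x ≤ u → g x = g l + ((∑ j, s j) + sP) * (x - l) := by
        intro x h1 h2
        simp only [hg]
        rw [Finset.sum_congr rfl (fun j _ => hs j x h1 h2), hsP x h1 h2,
          Finset.sum_add_distrib, ← Finset.sum_mul]
        ring
      have h1 := key t' hlt htu
      have h2 := key u (le_trans hlt htu) le_rfl
      rcases le_or_gt 0 ((∑ j, s j) + sP) with hM | hM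
      · have : g l ≤ g t' := by
          rw [h1]
          nlinarith
        exact le_trans (ht₀ l hlS) this
      · have : g u ≤ g t' := by
          rw [h1, h2]
          nlinarith
        exact le_trans (ht₀ u huS) this
    · -- all candidates are ≤ t'
      rw [Finset.not_nonempty_iff_eq_empty, Finset.filter_eq_empty_iff] at hU
      set m := S.max' ⟨P, hPS⟩ with hm
      have hmS : m ∈ S := S.max'_mem _
      have hmt : m ≤ t' := le_of_not_ge (hU hmS)
      have hgm : g m ≤ g t' := by
        simp only [hg]
        have h1 : ∀ j : Fin k, distI (A j) (B j) m ≤ distI (A j) (B j) t' := fun j =>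
          distI_mono_right (hAB j) hmt (Finset.le_max' _ _ (hBS j))
        have h2 : |m - P| ≤ |t' - P| := by
          have hPm : P ≤ m := Finset.le_max' _ _ hPS
          rw [abs_of_nonneg (by linarith), abs_of_nonneg (by linarith)]
          linarith
        exact add_le_add (Finset.sum_le_sum fun j _ => h1 j) h2
      exact le_trans (ht₀ m hmS) hgm
  · -- all candidates are ≥ t'
    rw [Finset.not_nonempty_iff_eq_empty, Finset.filter_eq_empty_iff] at hL
    set m := S.min' ⟨P, hPS⟩ with hm
    have hmS : m ∈ S := S.min'_mem _
    have hmt : t' ≤ m := le_of_not_ge (hL hmS)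
    have hgm : g m ≤ g t' := by
      simp only [hg]
      have h1 : ∀ j : Fin k, distI (A j) (B j) m ≤ distI (A j) (B j) t' := fun j =>
        distI_mono_left (hAB j) hmt (Finset.min'_le _ _ (hAS j))
      have h2 : |m - P| ≤ |t' - P| := by
        have hPm : m ≤ P := Finset.min'_le _ _ hPS
        rw [abs_of_nonpos (by linarith), abs_of_nonpos (by linarith)]
        linarith
      exact add_le_add (Finset.sum_le_sum fun j _ => h1 j) h2
    exact le_trans (ht₀ m hmS) hgm

/-- Hanan-grid optimality: the sum of ℓ1-distances to finitely many boxes plus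
the ℓ1-distance to a point `p` attains its minimum over ℝ³ at a point of the
Hanan grid generated by `p` and the box vertices. -/
theorem stmt9 (k : ℕ) (a b : Fin k → Fin 3 → ℝ) (hab : ∀ j i, a j i ≤ b j i)
    (p : Fin 3 → ℝ) :
    ∃ q : Fin 3 → ℝ,
      (∀ i : Fin 3, q i ∈ insert (p i)
        (Set.range (fun j => a j i) ∪ Set.range (fun j => b j i))) ∧
      ∀ q' : Fin 3 → ℝ,
        (∑ j, dist1Box (a j) (b j) q) + l1norm (q - p) ≤
        (∑ j, dist1Box (a j) (b j) q') + l1norm (q' - p) := by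
  classical
  have H : ∀ i : Fin 3, ∃ t : ℝ,
      (t = p i ∨ (∃ j, a j i = t) ∨ (∃ j, b j i = t)) ∧
      ∀ t' : ℝ, (∑ j, distI (a j i) (b j i) t) + |t - p i| ≤
        (∑ j, distI (a j i) (b j i) t') + |t' - p i| :=
    fun i => oneD k (fun j => a j i) (fun j => b j i) (fun j => hab j i) (p i)
  choose q hq1 hq2 using H
  have hobj : ∀ w : Fin 3 → ℝ,
      (∑ j, dist1Box (a j) (b j) w) + l1norm (w - p) =
      ∑ i, ((∑ j, distI (a j i) (b j i) (w i)) + |w i - p i|) := by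
    intro w
    rw [Finset.sum_congr rfl (fun j _ => dist1Box_eq (a j) (b j) w (hab j)),
      Finset.sum_comm]
    unfold l1norm
    rw [Finset.sum_add_distrib]
    rfl
  refine ⟨q, ?_, ?_⟩
  · intro i
    simp only [Set.mem_insert_iff, Set.mem_union, Set.mem_range]
    rcases hq1 i with h | h | h
    · exact Or.inl h
    · exact Or.inr (Or.inl h)
    · exact Or.inr (Or.inr h)
  · intro q'
    rw [hobj q, hobj q']
    exact Finset.sum_le_sum fun i _ => hq2 i (q' i)
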